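/- Let δ be a smooth symmetric diagonal with inverse δ⁻¹, let g(u) = 2u − δ(u) with inverse g⁻¹, and let K_δ(u,v) = min{u, v, (δ(u)+δ(v))/2} be the diagonal copula of δ. Then ∫₀¹∫₀¹ K_δ(u,v) du dv = ∫₀¹ g⁻¹(u)·δ⁻¹(u) du. -/

import Mathlib

open MeasureTheory Set

noncomputable section

/-- A smooth symmetric diagonal `δ` with (continuous) derivative `δ'`:
continuous, strictly increasing, 2-Lipschitz, `δ(0)=0`, `δ(1)=1`, `δ(t) ≤ t`,
satisfying the symmetry identity `δ(u) = 2u - 1 + δ(1-u)`, differentiable with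
continuous derivative, and `0 < δ'(u) < 2` for all but finitely many `u`. -/
def SmoothSymDiagonal (δ δ' : ℝ → ℝ) : Prop :=
  ContinuousOn δ (Icc 0 1) ∧
  StrictMonoOn δ (Icc 0 1) ∧
  (∀ u ∈ Icc (0:ℝ) 1, ∀ v ∈ Icc (0:ℝ) 1, |δ u - δ v| ≤ 2 * |u - v|) ∧
  δ 0 = 0 ∧ δ 1 = 1 ∧
  (∀ t ∈ Icc (0:ℝ) 1, δ t ∈ Icc (0:ℝ) 1 ∧ δ t ≤ t) ∧
  (∀ u ∈ Icc (0:ℝ) 1, δ u = 2 * u - 1 + δ (1 - u)) ∧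
  (∀ u ∈ Icc (0:ℝ) 1, HasDerivWithinAt δ (δ' u) (Icc 0 1) u) ∧
  ContinuousOn δ' (Icc 0 1) ∧
  {u ∈ Icc (0:ℝ) 1 | ¬(0 < δ' u ∧ δ' u < 2)}.Finite

/-- `finv` is the inverse of the bijection `f : [0,1] → [0,1]`. -/
def InverseOnUnitInterval (f finv : ℝ → ℝ) : Prop :=
  (∀ t ∈ Icc (0:ℝ) 1, finv t ∈ Icc (0:ℝ) 1) ∧
  (∀ t ∈ Icc (0:ℝ) 1, f (finv t) = t) ∧
  (∀ t ∈ Icc (0:ℝ) 1, finv (f t) = t)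

/-- The diagonal copula `K_δ(u,v) = min {u, v, (δ(u)+δ(v))/2}`. -/
def diagCopula (δ : ℝ → ℝ) : ℝ → ℝ → ℝ := fun u v => min (min u v) ((δ u + δ v) / 2)

/-!
Let `A(u) = ∫₀¹ K_δ(u, v) dv`. For fixed `v`, `u ↦ K_δ(u, v)` is 1-Lipschitz and, away from the
two points where `g(u) = δ(v)` or `δ(u) = g(v)`, locally equal to `u`, `(δ(u) + δ(v))/2` or `v`.
Differentiating under the integral sign gives, with `φ = δ⁻¹ ∘ g` and `ψ = g⁻¹ ∘ δ`,
`A'(u) = 1 - φ(u) + (φ(u) - ψ(u)) δ'(u)/2`. Integration by parts yields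
`∫₀¹ A = A(1) - ∫₀¹ u A'(u)` with `A(1) = 1/2`, and
`u A'(u) = u - (q(g(u)) g'(u) + q(δ(u)) δ'(u))/2` for `q = g⁻¹ · δ⁻¹`, so the substitutions
`t = g(u)` and `t = δ(u)` give `∫₀¹ u A'(u) = 1/2 - ∫₀¹ q`.
-/

open Filter

theorem continuousOn_Icc_of_monotoneOn_of_surjOn {f : ℝ → ℝ} {a b : ℝ}
    (hmono : MonotoneOn f (Icc a b)) (hmaps : MapsTo f (Icc a b) (Icc a b))
    (hsurj : SurjOn f (Icc a b) (Icc a b)) : ContinuousOn f (Icc a b) := by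
  classical
  -- extended by the identity, `f` becomes a monotone surjection of `ℝ`
  set F : ℝ → ℝ := (Icc a b).piecewise f id
  have hF_mono : Monotone F := by
    intro x y hxy
    by_cases hx : x ∈ Icc a b <;> by_cases hy : y ∈ Icc a b <;>
      simp only [F, piecewise_eq_of_mem, piecewise_eq_of_notMem, hx, hy, not_false_eq_true, id]
    · exact hmono hx hy hxy
    · have : b < y := by by_contra h; exact hy ⟨hx.1.trans hxy, not_lt.1 h⟩
      exact (hmaps hx).2.trans this.le
    · have : x < a := by by_contra h; exact hx ⟨not_lt.1 h, hxy.trans hy.2⟩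
      exact this.le.trans (hmaps hy).1
    · exact hxy
  have hF_surj : Function.Surjective F := by
    intro y
    by_cases hy : y ∈ Icc a b
    · obtain ⟨x, hx, rfl⟩ := hsurj hy
      exact ⟨x, piecewise_eq_of_mem _ _ _ hx⟩
    · exact ⟨y, piecewise_eq_of_notMem _ _ _ hy⟩
  exact (hF_mono.continuous_of_surjective hF_surj).continuousOn.congr
    fun x hx => (piecewise_eq_of_mem _ _ _ hx).symm

theorem integral_ite_lt_ite_lt {l r a b c : ℝ} (hla : l ≤ a) (hab : a ≤ b) (hbr : b ≤ r) :
    ∫ v in l..r, (if b < v then 1 else if a < v then c else 0) = (r - b) + (b - a) * c := by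
  set f : ℝ → ℝ := fun v => if b < v then 1 else if a < v then c else 0
  have piece : ∀ {s t : ℝ} (k : ℝ), s ≤ t → EqOn (fun _ => k) f (Ioo s t) →
      IntervalIntegrable f volume s t ∧ ∫ v in s..t, f v = (t - s) * k := fun k hst hf => by
    rw [← uIoo_of_le hst] at hf
    exact ⟨intervalIntegrable_const.congr_uIoo hf,
      by rw [← intervalIntegral.integral_congr_uIoo hf, intervalIntegral.integral_const,
        smul_eq_mul]⟩
  obtain ⟨hi₁, he₁⟩ := piece 0 hla fun v hv => by
    simp [f, (hv.2.trans_le hab).not_gt, hv.2.not_gt]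
  obtain ⟨hi₂, he₂⟩ := piece c hab fun v hv => by simp [f, hv.2.not_gt, hv.1]
  obtain ⟨hi₃, he₃⟩ := piece 1 hbr fun v hv => by simp [f, hv.1]
  rw [← intervalIntegral.integral_add_adjacent_intervals (hi₁.trans hi₂) hi₃,
    ← intervalIntegral.integral_add_adjacent_intervals hi₁ hi₂, he₁, he₂, he₃]
  ring

theorem integral_comp_mul_deriv_of_mapsTo {a b : ℝ} (hab : a ≤ b) {f f' q : ℝ → ℝ} {s : Set ℝ}
    (hf : ContinuousOn f (Icc a b)) (hff' : ∀ x ∈ Ioo a b, HasDerivAt f (f' x) x)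
    (hf' : ContinuousOn f' (Icc a b)) (hmaps : MapsTo f (Icc a b) s) (hq : ContinuousOn q s) :
    ∫ x in a..b, q (f x) * f' x = ∫ t in f a..f b, q t := by
  rw [← uIcc_of_le hab] at hf hf' hmaps
  refine intervalIntegral.integral_comp_mul_deriv'' hf
    (fun x hx => (hff' x ?_).hasDerivWithinAt) hf' (hq.mono hmaps.image_subset)
  rwa [min_eq_left hab, max_eq_right hab] at hx

namespace InverseOnUnitInterval

variable {f finv : ℝ → ℝ} (h : InverseOnUnitInterval f finv) (hf : StrictMonoOn f (Icc 0 1))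
include h hf

theorem lt_iff_lt {t v : ℝ} (ht : t ∈ Icc (0:ℝ) 1) (hv : v ∈ Icc (0:ℝ) 1) :
    finv t < v ↔ t < f v := by
  conv_rhs => rw [← h.2.1 t ht]
  exact (hf.lt_iff_lt (h.1 t ht) hv).symm

theorem monotoneOn : MonotoneOn finv (Icc 0 1) := fun s hs _ ht hst =>
  not_lt.1 fun hlt => (h.2.1 s hs ▸ (h.lt_iff_lt hf ht (h.1 s hs)).1 hlt).not_ge hst

theorem continuousOn (hmaps : MapsTo f (Icc 0 1) (Icc 0 1)) : ContinuousOn finv (Icc 0 1) :=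
  continuousOn_Icc_of_monotoneOn_of_surjOn (h.monotoneOn hf) h.1
    fun t ht => ⟨f t, hmaps ht, h.2.2 t ht⟩

end InverseOnUnitInterval

theorem lipschitzOnWith_diagCopula_left {δ : ℝ → ℝ} (hδ : LipschitzOnWith 2 δ (Icc 0 1))
    (v : ℝ) :
    LipschitzOnWith 1 (fun u => diagCopula δ u v) (Icc 0 1) := by
  refine LipschitzOnWith.mk_one fun u hu u' hu' => ?_
  simp only [Real.dist_eq, diagCopula]
  calc |min (min u v) ((δ u + δ v) / 2) - min (min u' v) ((δ u' + δ v) / 2)|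
      ≤ max |min u v - min u' v| |(δ u + δ v) / 2 - (δ u' + δ v) / 2| :=
        abs_min_sub_min_le_max _ _ _ _
    _ ≤ |u - u'| := by
        refine max_le ((abs_min_sub_min_le_max _ _ _ _).trans (by simp)) ?_
        rw [show (δ u + δ v) / 2 - (δ u' + δ v) / 2 = (δ u - δ u') / 2 by ring, abs_div,
          abs_two]
        have := hδ.dist_le_mul u hu u' hu'
        rw [Real.dist_eq, Real.dist_eq] at this
        push_cast at this
        linarith

theorem continuousOn_diagCopula_right {δ : ℝ → ℝ} (hδ : ContinuousOn δ (Icc 0 1)) (u : ℝ) :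
    ContinuousOn (diagCopula δ u) (Icc 0 1) :=
  (continuousOn_const.inf continuousOn_id).inf ((continuousOn_const.add hδ).div_const 2)

theorem lipschitzOnWith_integral_diagCopula {δ : ℝ → ℝ} (hδ : LipschitzOnWith 2 δ (Icc 0 1)) :
    LipschitzOnWith 1 (fun u => ∫ v in (0:ℝ)..1, diagCopula δ u v) (Icc 0 1) := by
  refine LipschitzOnWith.mk_one fun u hu u' hu' => ?_
  have hint : ∀ x, IntervalIntegrable (diagCopula δ x) volume 0 1 := fun x =>
    (continuousOn_diagCopula_right hδ.continuousOn x).intervalIntegrable_of_Icc zero_le_one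
  rw [dist_eq_norm, ← intervalIntegral.integral_sub (hint u) (hint u')]
  calc ‖∫ v in (0:ℝ)..1, (diagCopula δ u v - diagCopula δ u' v)‖ ≤ |u - u'| * |1 - 0| :=
        intervalIntegral.norm_integral_le_of_norm_le_const fun v _ => by
          simpa [← dist_eq_norm, Real.dist_eq u u'] using
            (lipschitzOnWith_diagCopula_left hδ v).dist_le_mul u hu u' hu'
    _ = dist u u' := by simp [Real.dist_eq]

def diagCompanion (δ : ℝ → ℝ) (u : ℝ) : ℝ := 2 * u - δ u

namespace SmoothSymDiagonal

variable {δ δ' : ℝ → ℝ} (hδ : SmoothSymDiagonal δ δ')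
include hδ

theorem continuousOn : ContinuousOn δ (Icc 0 1) := hδ.1

theorem strictMonoOn : StrictMonoOn δ (Icc 0 1) := hδ.2.1

theorem map_zero : δ 0 = 0 := hδ.2.2.2.1

theorem map_one : δ 1 = 1 := hδ.2.2.2.2.1

theorem mapsTo : MapsTo δ (Icc 0 1) (Icc 0 1) := fun t ht => (hδ.2.2.2.2.2.1 t ht).1

theorem le_self {t : ℝ} (ht : t ∈ Icc (0:ℝ) 1) : δ t ≤ t := (hδ.2.2.2.2.2.1 t ht).2

theorem lipschitzOnWith : LipschitzOnWith 2 δ (Icc 0 1) :=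
  LipschitzOnWith.of_dist_le_mul fun u hu v hv => by
    simpa [Real.dist_eq] using hδ.2.2.1 u hu v hv

theorem continuousOn_deriv : ContinuousOn δ' (Icc 0 1) := hδ.2.2.2.2.2.2.2.2.1

theorem hasDerivAt {u : ℝ} (hu : u ∈ Ioo (0:ℝ) 1) : HasDerivAt δ (δ' u) u :=
  (hδ.2.2.2.2.2.2.2.1 u (Ioo_subset_Icc_self hu)).hasDerivAt (Icc_mem_nhds hu.1 hu.2)

theorem companion_eq {t : ℝ} (ht : t ∈ Icc (0:ℝ) 1) : diagCompanion δ t = 1 - δ (1 - t) := by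
  rw [diagCompanion, hδ.2.2.2.2.2.2.1 t ht]; ring

theorem companion_zero : diagCompanion δ 0 = 0 := by simp [diagCompanion, hδ.map_zero]

theorem companion_one : diagCompanion δ 1 = 1 := by rw [diagCompanion, hδ.map_one]; ring

theorem le_companion {t : ℝ} (ht : t ∈ Icc (0:ℝ) 1) : t ≤ diagCompanion δ t := by
  rw [diagCompanion]; linarith [hδ.le_self ht]

theorem companion_mapsTo : MapsTo (diagCompanion δ) (Icc 0 1) (Icc 0 1) := fun _ ht =>
  ⟨ht.1.trans (hδ.le_companion ht),
    hδ.companion_eq ht ▸ sub_le_self _ (hδ.mapsTo ⟨sub_nonneg.2 ht.2, sub_le_self _ ht.1⟩).1⟩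

theorem companion_strictMonoOn : StrictMonoOn (diagCompanion δ) (Icc 0 1) := by
  intro s hs t ht hst
  rw [hδ.companion_eq hs, hδ.companion_eq ht]
  have := hδ.strictMonoOn ⟨sub_nonneg.2 ht.2, sub_le_self _ ht.1⟩
    ⟨sub_nonneg.2 hs.2, sub_le_self _ hs.1⟩ (sub_lt_sub_left hst 1)
  linarith

theorem companion_continuousOn : ContinuousOn (diagCompanion δ) (Icc 0 1) :=
  (continuousOn_const.mul continuousOn_id).sub hδ.continuousOn

theorem companion_hasDerivAt {u : ℝ} (hu : u ∈ Ioo (0:ℝ) 1) :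
    HasDerivAt (diagCompanion δ) (2 - δ' u) u := by
  have := ((hasDerivAt_id' u).const_mul (2:ℝ)).fun_sub (hδ.hasDerivAt hu)
  rwa [mul_one] at this

theorem diagCopula_one_left {v : ℝ} (hv : v ∈ Icc (0:ℝ) 1) : diagCopula δ 1 v = v := by
  have : 2 * v - δ v ≤ 1 := (hδ.companion_mapsTo hv).2
  rw [diagCopula, hδ.map_one, min_eq_right hv.2, min_eq_left (by linarith)]

/-- Off the two curves `g(u) = δ(v)` and `δ(u) = g(v)`, the copula is locally one of
`u`, `(δ(u)+δ(v))/2`, `v` as a function of `u`. -/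
theorem hasDerivAt_diagCopula_left {u v : ℝ} (hu : u ∈ Ioo (0:ℝ) 1) (hv : v ∈ Icc (0:ℝ) 1)
    (h₁ : diagCompanion δ u ≠ δ v) (h₂ : δ u ≠ diagCompanion δ v) :
    HasDerivAt (fun x => diagCopula δ x v)
      (if diagCompanion δ u < δ v then 1 else if δ u < diagCompanion δ v then δ' u / 2 else 0)
      u := by
  have hδu : HasDerivAt δ (δ' u) u := hδ.hasDerivAt hu
  have hgu : ContinuousAt (diagCompanion δ) u := (hδ.companion_hasDerivAt hu).continuousAt
  have hu' : u ∈ Icc (0:ℝ) 1 := Ioo_subset_Icc_self hu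
  by_cases hlow : diagCompanion δ u < δ v
  · rw [if_pos hlow]
    have hlt : u < v := (hδ.le_companion hu').trans_lt (hlow.trans_le (hδ.le_self hv))
    refine (hasDerivAt_id' u).congr_of_eventuallyEq ?_
    filter_upwards [hgu.eventually_lt continuousAt_const hlow,
      continuousAt_id.eventually_lt continuousAt_const hlt] with x hgx hx
    simp only [diagCompanion] at hgx
    simp only [diagCopula, id] at hx ⊢
    rw [min_eq_left hx.le, min_eq_left (by linarith)]
  rw [if_neg hlow]
  have hlow : δ v < diagCompanion δ u := lt_of_le_of_ne (not_lt.1 hlow) h₁.symm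
  by_cases hmid : δ u < diagCompanion δ v
  · rw [if_pos hmid]
    refine ((hδu.add_const (δ v)).div_const 2).congr_of_eventuallyEq ?_
    filter_upwards [continuousAt_const.eventually_lt hgu hlow,
      hδu.continuousAt.eventually_lt continuousAt_const hmid] with x hgx hx
    simp only [diagCompanion] at hgx hx
    simp only [diagCopula]
    rw [min_eq_right (le_min (by linarith) (by linarith))]
  rw [if_neg hmid]
  have hhigh : diagCompanion δ v < δ u := lt_of_le_of_ne (not_lt.1 hmid) h₂.symm
  have hlt : v < u := (hδ.le_companion hv).trans_lt (hhigh.trans_le (hδ.le_self hu'))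
  refine (hasDerivAt_const u v).congr_of_eventuallyEq ?_
  filter_upwards [continuousAt_const.eventually_lt hδu.continuousAt hhigh,
    continuousAt_const.eventually_lt continuousAt_id hlt] with x hx hvx
  simp only [diagCompanion] at hx
  simp only [diagCopula, id] at hvx ⊢
  rw [min_eq_right hvx.le, min_eq_left (by linarith)]

section Inverses

variable {δinv ginv : ℝ → ℝ} (hδinv : InverseOnUnitInterval δ δinv)
  (hginv : InverseOnUnitInterval (diagCompanion δ) ginv)
include hδinv hginv

/-- With `φ = δ⁻¹ ∘ g` and `ψ = g⁻¹ ∘ δ`, the partial derivative `∂K/∂u (u, v)` is `1` for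
`v > φ(u)`, `δ'(u)/2` for `ψ(u) < v < φ(u)` and `0` for `v < ψ(u)`. -/
theorem hasDerivAt_integral_diagCopula {u : ℝ} (hu : u ∈ Ioo (0:ℝ) 1) :
    HasDerivAt (fun x => ∫ v in (0:ℝ)..1, diagCopula δ x v)
      (1 - δinv (diagCompanion δ u) + (δinv (diagCompanion δ u) - ginv (δ u)) * (δ' u / 2))
      u := by
  have hu' : u ∈ Icc (0:ℝ) 1 := Ioo_subset_Icc_self hu
  set φ := δinv (diagCompanion δ u)
  set ψ := ginv (δ u)
  have hψφ : ψ ≤ φ :=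
    calc ψ ≤ ginv (diagCompanion δ u) :=
          hginv.monotoneOn hδ.companion_strictMonoOn (hδ.mapsTo hu')
            (hδ.companion_mapsTo hu') ((hδ.le_self hu').trans (hδ.le_companion hu'))
      _ = δinv (δ u) := by rw [hginv.2.2 u hu', hδinv.2.2 u hu']
      _ ≤ φ := hδinv.monotoneOn hδ.strictMonoOn (hδ.mapsTo hu') (hδ.companion_mapsTo hu')
          ((hδ.le_self hu').trans (hδ.le_companion hu'))
  have hφ := hδinv.1 _ (hδ.companion_mapsTo hu')
  have hψ := hginv.1 _ (hδ.mapsTo hu')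
  have hK : ∀ x, ContinuousOn (diagCopula δ x) (Icc 0 1) :=
    continuousOn_diagCopula_right hδ.continuousOn
  have hUI : uIoc (0:ℝ) 1 ⊆ Icc 0 1 := by
    rw [uIoc_of_le zero_le_one]; exact Ioc_subset_Icc_self
  obtain ⟨-, hderiv⟩ := intervalIntegral.hasDerivAt_integral_of_dominated_loc_of_lip
    (bound := fun _ => 1) (F' := fun v => if φ < v then 1 else if ψ < v then δ' u / 2 else 0)
    (Ioo_mem_nhds hu.1 hu.2)
    (Eventually.of_forall fun x => ((hK x).mono hUI).aestronglyMeasurable measurableSet_uIoc)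
    ((hK u).intervalIntegrable_of_Icc zero_le_one)
    ((measurable_const.ite measurableSet_Ioi
      (measurable_const.ite measurableSet_Ioi measurable_const)).aestronglyMeasurable)
    (ae_of_all _ fun v _ => by
      simpa using
        (lipschitzOnWith_diagCopula_left hδ.lipschitzOnWith v).mono Ioo_subset_Icc_self)
    intervalIntegrable_const
    (by
      filter_upwards [volume.ae_ne φ, volume.ae_ne ψ] with v hvφ hvψ hv
      have hv := hUI hv
      have h₁ : diagCompanion δ u ≠ δ v := fun h =>
        hvφ ((hδinv.2.2 v hv).symm.trans (congrArg δinv h.symm))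
      have h₂ : δ u ≠ diagCompanion δ v := fun h =>
        hvψ ((hginv.2.2 v hv).symm.trans (congrArg ginv h.symm))
      simpa only [← hδinv.lt_iff_lt hδ.strictMonoOn (hδ.companion_mapsTo hu') hv,
        ← hginv.lt_iff_lt hδ.companion_strictMonoOn (hδ.mapsTo hu') hv] using
        hδ.hasDerivAt_diagCopula_left hu hv h₁ h₂)
  rwa [integral_ite_lt_ite_lt hψ.1 hψφ hφ.2] at hderiv

theorem integral_mul_deriv_integral_diagCopula :
    ∫ u in (0:ℝ)..1,
        u * (1 - δinv (diagCompanion δ u) + (δinv (diagCompanion δ u) - ginv (δ u)) * (δ' u / 2))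
      = 1 / 2 - ∫ t in (0:ℝ)..1, ginv t * δinv t := by
  set q : ℝ → ℝ := fun t => ginv t * δinv t
  have hq : ContinuousOn q (Icc 0 1) :=
    (hginv.continuousOn hδ.companion_strictMonoOn hδ.companion_mapsTo).mul
      (hδinv.continuousOn hδ.strictMonoOn hδ.mapsTo)
  have hpoint : EqOn
      (fun u => u * (1 - δinv (diagCompanion δ u) + (δinv (diagCompanion δ u) - ginv (δ u)) *
        (δ' u / 2)))
      (fun u => u - (q (diagCompanion δ u) * (2 - δ' u) + q (δ u) * δ' u) / 2) (uIcc 0 1) := by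
    intro u hu
    rw [uIcc_of_le zero_le_one] at hu
    simp only [q, hginv.2.2 u hu, hδinv.2.2 u hu]
    ring
  have hg_cont : ContinuousOn (fun u => q (diagCompanion δ u) * (2 - δ' u)) (Icc 0 1) :=
    (hq.comp hδ.companion_continuousOn hδ.companion_mapsTo).mul
      (continuousOn_const.sub hδ.continuousOn_deriv)
  have hδ_cont : ContinuousOn (fun u => q (δ u) * δ' u) (Icc 0 1) :=
    (hq.comp hδ.continuousOn hδ.mapsTo).mul hδ.continuousOn_deriv
  have hg_subst :
      ∫ u in (0:ℝ)..1, q (diagCompanion δ u) * (2 - δ' u) = ∫ t in (0:ℝ)..1, q t := by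
    simpa only [hδ.companion_zero, hδ.companion_one] using
      integral_comp_mul_deriv_of_mapsTo zero_le_one hδ.companion_continuousOn
        (fun _ hu => hδ.companion_hasDerivAt hu) (continuousOn_const.sub hδ.continuousOn_deriv)
        hδ.companion_mapsTo hq
  have hδ_subst : ∫ u in (0:ℝ)..1, q (δ u) * δ' u = ∫ t in (0:ℝ)..1, q t := by
    simpa only [hδ.map_zero, hδ.map_one] using
      integral_comp_mul_deriv_of_mapsTo zero_le_one hδ.continuousOn
        (fun _ hu => hδ.hasDerivAt hu) hδ.continuousOn_deriv hδ.mapsTo hq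
  have hg_int := hg_cont.intervalIntegrable_of_Icc (μ := volume) zero_le_one
  have hδ_int := hδ_cont.intervalIntegrable_of_Icc (μ := volume) zero_le_one
  rw [intervalIntegral.integral_congr hpoint, intervalIntegral.integral_sub
      intervalIntegral.intervalIntegrable_id ((hg_int.add hδ_int).div_const 2),
    intervalIntegral.integral_div, intervalIntegral.integral_add hg_int hδ_int, hg_subst,
    hδ_subst, integral_id]
  ring

end Inverses

end SmoothSymDiagonal

theorem diag_copula_integral (δ δ' δinv : ℝ → ℝ)
    (hδ : SmoothSymDiagonal δ δ') (hδinv : InverseOnUnitInterval δ δinv)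
    (g ginv : ℝ → ℝ) (hg : ∀ u : ℝ, g u = 2 * u - δ u)
    (hginv : InverseOnUnitInterval g ginv) :
    (∫ u in (0:ℝ)..1, ∫ v in (0:ℝ)..1, diagCopula δ u v) =
      ∫ u in (0:ℝ)..1, ginv u * δinv u := by
  obtain rfl : g = diagCompanion δ := funext hg
  have hIcc : uIcc (0:ℝ) 1 = Icc 0 1 := uIcc_of_le zero_le_one
  have hIoo : Ioo (min (0:ℝ) 1) (max 0 1) = Ioo 0 1 := by simp
  have hφ := (hδinv.continuousOn hδ.strictMonoOn hδ.mapsTo).comp hδ.companion_continuousOn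
    hδ.companion_mapsTo
  have hψ := (hginv.continuousOn hδ.companion_strictMonoOn hδ.companion_mapsTo).comp
    hδ.continuousOn hδ.mapsTo
  have hparts := intervalIntegral.integral_mul_deriv_eq_deriv_mul_of_hasDerivAt
    (u := fun x => x) continuousOn_id
    (hIcc ▸ (lipschitzOnWith_integral_diagCopula hδ.lipschitzOnWith).continuousOn)
    (fun x _ => hasDerivAt_id' x)
    (fun x hx => hδ.hasDerivAt_integral_diagCopula hδinv hginv (hIoo ▸ hx))
    intervalIntegrable_const
    ((((continuousOn_const.sub hφ).add ((hφ.sub hψ).mul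
      (hδ.continuousOn_deriv.div_const 2)))).intervalIntegrable_of_Icc zero_le_one)
  rw [hδ.integral_mul_deriv_integral_diagCopula hδinv hginv,
    intervalIntegral.integral_congr fun v hv => hδ.diagCopula_one_left (hIcc ▸ hv)] at hparts
  simp only [one_mul, zero_mul, integral_id] at hparts
  linarith
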